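/- Let K ⊂ X be a compact invariant set for the flow φ_t of a smooth vector field W on a manifold X, and suppose K admits a smooth Lyapunov function l on its basin B with l(K) = 0, dl(W) < 0 outside K, and l → +∞ at the boundary of B. If div_{dμ}(W) < 0 on some open neighbourhood V of K, then there exists a smooth positive function F on B such that the rescaled field W_1 = F·W satisfies div_{dμ}(W_1) < 0 on all of B. -/

import Mathlib

open scoped BigOperators

/-- Divergence of `W` with respect to the density `μ` in coordinates on `ℝᵐ`. -/
noncomputable def divDensity (m : ℕ) (μ : (Fin m → ℝ) → ℝ) (W : (Fin m → ℝ) → (Fin m → ℝ))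
    (x : Fin m → ℝ) : ℝ :=
  (∑ i, fderiv ℝ (fun y => μ y * W y i) x (Pi.single i 1)) / μ x

/-- An entire function `g` on `ℝ` whose derivative `h` is nonnegative and dominates
prescribed bounds `c n` on `[n+1, ∞)`, and `c 0` everywhere. -/
lemma entire_dominating (c : ℕ → ℝ) :
    ∃ g h : ℝ → ℝ, AnalyticOnNhd ℝ g Set.univ ∧ (∀ x, HasDerivAt g (h x) x) ∧
      (∀ x, 0 ≤ h x) ∧ (∀ x, c 0 ≤ h x) ∧
      (∀ (n : ℕ) (x : ℝ), (n : ℝ) + 1 ≤ x → c n ≤ h x) := by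
  -- nonnegative bounds
  set d : ℕ → ℝ := fun n => max (c n) 0 with hd
  have hd0 : ∀ n, 0 ≤ d n := fun n => le_max_right _ _
  have hcd : ∀ n, c n ≤ d n := fun n => le_max_left _ _
  -- choose N n with d n ≤ 2 ^ N n
  have hN : ∀ n, ∃ N : ℕ, d n < 2 ^ N := fun n => pow_unbounded_of_one_lt (d n) one_lt_two
  choose N hNlt using hN
  -- the exponents
  set σ : ℕ → ℕ := fun n => 2 * ∑ m ∈ Finset.range (n + 1), (N m + 1) with hσ
  have hσmono : StrictMono σ := by
    apply strictMono_nat_of_lt_succ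
    intro n
    have : ∑ m ∈ Finset.range (n + 1), (N m + 1) < ∑ m ∈ Finset.range (n + 2), (N m + 1) := by
      rw [Finset.sum_range_succ (n := n + 1)]
      omega
    show σ n < σ (n + 1)
    simp only [hσ]
    rw [show n + 1 + 1 = (n + 1) + 1 from rfl, Finset.sum_range_succ (n := n + 1)]
    omega
  have hσeven : ∀ n, Even (σ n) := fun n => even_two_mul _
  have hσge : ∀ n, N n + n + 2 ≤ σ n := by
    intro n
    have h1 : N n + 1 + n ≤ ∑ m ∈ Finset.range (n + 1), (N m + 1) := by
      induction n with
      | zero => simp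
      | succ k ih =>
        rw [Finset.sum_range_succ]
        have : k + 1 ≤ ∑ m ∈ Finset.range (k + 1), (N m + 1) := by
          calc k + 1 = ∑ m ∈ Finset.range (k + 1), 1 := by simp
          _ ≤ _ := Finset.sum_le_sum (fun m _ => by omega)
        omega
    simp only [hσ]; omega
  have hσpos : ∀ n, n + 1 ≤ σ n := fun n => by have := hσge n; omega
  -- the coefficients
  set q : ℕ → ℝ := fun k =>
    (if k = 0 then d 0 else 0) +
      ∑ n ∈ Finset.range k, (if σ n = k then d n / ((n : ℝ) + 1) ^ k else 0) with hq
  have hq0 : ∀ k, 0 ≤ q k := by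
    intro k
    apply add_nonneg
    · positivity
    · apply Finset.sum_nonneg
      intro n _
      positivity
  have hqzero : q 0 = d 0 := by simp [hq]
  have hsingle : ∀ n : ℕ,
      (∑ m ∈ Finset.range (σ n), (if σ m = σ n then d m / ((m : ℝ) + 1) ^ (σ n) else 0))
        = d n / ((n : ℝ) + 1) ^ (σ n) := by
    intro n
    have hmem : n ∈ Finset.range (σ n) := Finset.mem_range.2 (by have := hσpos n; omega)
    rw [Finset.sum_eq_single_of_mem n hmem]
    · simp
    · intro m _ hmn
      apply if_neg
      intro h
      exact hmn (hσmono.injective h)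
  have hqσ : ∀ n, d n / ((n : ℝ) + 1) ^ (σ n) ≤ q (σ n) := by
    intro n
    have h0 : (0:ℝ) ≤ (if σ n = 0 then d 0 else 0) := by positivity
    have : q (σ n) = (if σ n = 0 then d 0 else 0)
        + ∑ m ∈ Finset.range (σ n), (if σ m = σ n then d m / ((m : ℝ) + 1) ^ (σ n) else 0) := rfl
    rw [this, hsingle n]
    linarith
  have hqodd : ∀ k, ¬ Even k → q k = 0 := by
    intro k hk
    have h1 : k ≠ 0 := by rintro rfl; exact hk (Even.zero)
    rw [hq]
    simp only [if_neg h1, zero_add]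
    apply Finset.sum_eq_zero
    intro n _
    apply if_neg
    intro h
    exact hk (h ▸ hσeven n)
  -- summability of q k * R ^ k for every R ≥ 0
  have hsum : ∀ R : ℝ, 0 ≤ R → Summable (fun k => q k * R ^ k) := by
    intro R hR
    have : (fun k => q k * R ^ k) = (fun k =>
        (if k = 0 then d 0 else 0) * R ^ k +
        (∑ n ∈ Finset.range k, (if σ n = k then d n / ((n : ℝ) + 1) ^ k else 0)) * R ^ k) := by
      funext k; rw [hq]; ring
    rw [this]
    apply Summable.add
    · apply summable_of_ne_finset_zero (s := {0})
      intro k hk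
      simp only [Finset.mem_singleton] at hk
      simp [hk]
    · -- extension by zero along σ
      set t : ℕ → ℝ := fun n => d n / ((n : ℝ) + 1) ^ (σ n) * R ^ (σ n) with ht
      set f : ℕ → ℝ := fun k =>
        (∑ n ∈ Finset.range k, (if σ n = k then d n / ((n : ℝ) + 1) ^ k else 0)) * R ^ k with hf
      show Summable f
      have hfσ : ∀ n, f (σ n) = t n := by
        intro n
        show (∑ m ∈ Finset.range (σ n), (if σ m = σ n then d m / ((m : ℝ) + 1) ^ (σ n) else 0))
            * R ^ (σ n) = d n / ((n : ℝ) + 1) ^ (σ n) * R ^ (σ n)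
        rw [hsingle n]
      have hfzero : ∀ k ∉ Set.range σ, f k = 0 := by
        intro k hk
        show (∑ n ∈ Finset.range k, (if σ n = k then d n / ((n : ℝ) + 1) ^ k else 0)) * R ^ k = 0
        have : ∀ n ∈ Finset.range k, (if σ n = k then d n / ((n : ℝ) + 1) ^ k else 0) = 0 := by
          intro n _
          exact if_neg (fun h => hk ⟨n, h⟩)
        rw [Finset.sum_eq_zero this, zero_mul]
      rw [← Function.Injective.summable_iff hσmono.injective hfzero]
      have hfc : (f ∘ σ) = t := funext hfσ
      rw [hfc]
      -- now show Summable t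
      obtain ⟨n₀, hn₀⟩ : ∃ n₀ : ℕ, 2 * R ≤ n₀ := exists_nat_ge (2 * R)
      rw [← summable_nat_add_iff n₀]
      have hbound : ∀ n : ℕ, t (n + n₀) ≤ (1/2 : ℝ) ^ n := by
        intro n
        set k := n + n₀ with hk
        have hRk : R / ((k : ℝ) + 1) ≤ 1 / 2 := by
          rw [div_le_div_iff₀ (by positivity) (by norm_num)]
          have : (n₀ : ℝ) ≤ (k : ℝ) := by exact_mod_cast Nat.le_add_left n₀ n
          linarith
        have ht' : t k = d k * (R / ((k : ℝ) + 1)) ^ (σ k) := by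
          rw [ht, div_pow]; ring
        rw [ht']
        have h1 : (R / ((k : ℝ) + 1)) ^ (σ k) ≤ (1/2 : ℝ) ^ (σ k) :=
          pow_le_pow_left₀ (by positivity) hRk _
        have h2 : d k * (1/2 : ℝ) ^ (σ k) ≤ 2 ^ (N k) * (1/2 : ℝ) ^ (σ k) := by
          apply mul_le_mul_of_nonneg_right (hNlt k).le (by positivity)
        have h3 : (2:ℝ) ^ (N k) * (1/2 : ℝ) ^ (σ k) ≤ (1/2 : ℝ) ^ k := by
          have hσk : N k + k ≤ σ k := by have := hσge k; omega
          calc (2:ℝ) ^ (N k) * (1/2 : ℝ) ^ (σ k)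
              ≤ (2:ℝ) ^ (N k) * (1/2 : ℝ) ^ (N k + k) := by
                apply mul_le_mul_of_nonneg_left _ (by positivity)
                exact pow_le_pow_of_le_one (by norm_num) (by norm_num) hσk
          _ = (1/2 : ℝ) ^ k := by
                rw [pow_add, ← mul_assoc, ← mul_pow]
                norm_num
        calc d k * (R / ((k : ℝ) + 1)) ^ (σ k) ≤ d k * (1/2 : ℝ) ^ (σ k) :=
              mul_le_mul_of_nonneg_left h1 (hd0 k)
        _ ≤ 2 ^ (N k) * (1/2 : ℝ) ^ (σ k) := h2
        _ ≤ (1/2 : ℝ) ^ k := h3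
        _ ≤ (1/2 : ℝ) ^ n := pow_le_pow_of_le_one (by norm_num) (by norm_num) (by omega)
      apply Summable.of_nonneg_of_le (fun n => by positivity) hbound
      exact summable_geometric_of_lt_one (by norm_num) (by norm_num)
  -- antiderivative coefficients
  set γ : ℕ → ℝ := fun k => Nat.casesOn k 0 (fun j => q j / ((j : ℝ) + 1)) with hγ
  have hγ0 : γ 0 = 0 := rfl
  have hγs : ∀ j, γ (j + 1) = q j / ((j : ℝ) + 1) := fun j => rfl
  have hγnn : ∀ k, 0 ≤ γ k := by
    intro k
    cases k with
    | zero => exact le_refl 0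
    | succ j => rw [hγs]; positivity
  have hγmul : ∀ j, γ (j + 1) * ((j : ℝ) + 1) = q j := by
    intro j
    rw [hγs]
    field_simp
  have hγle : ∀ j, γ (j + 1) ≤ q j := by
    intro j
    rw [hγs]
    rw [div_le_iff₀ (by positivity)]
    nlinarith [hq0 j, Nat.cast_nonneg (α := ℝ) j]
  -- summability of |γ| series
  have hγsum : ∀ r : ℝ, 0 ≤ r → Summable (fun k => |γ k| * r ^ k) := by
    intro r hr
    rw [← summable_nat_add_iff 1]
    have hb : ∀ k : ℕ, |γ (k + 1)| * r ^ (k + 1) ≤ (q k * r ^ k) * r := by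
      intro k
      rw [abs_of_nonneg (hγnn (k + 1)), pow_succ, ← mul_assoc]
      apply mul_le_mul_of_nonneg_right _ hr
      exact mul_le_mul_of_nonneg_right (hγle k) (by positivity)
    exact Summable.of_nonneg_of_le (fun k => by positivity) hb ((hsum r hr).mul_right r)
  -- the two functions
  set g : ℝ → ℝ := fun x => ∑' k, γ k * x ^ k with hgdef
  set h : ℝ → ℝ := fun x => ∑' k, q k * x ^ k with hhdef
  have habs : ∀ x : ℝ, |x| ≤ |x| + 1 := fun x => by linarith
  have hhx : ∀ x : ℝ, Summable (fun k => q k * x ^ k) := by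
    intro x
    apply Summable.of_norm_bounded ((hsum (|x| + 1) (by positivity)))
    intro k
    rw [Real.norm_eq_abs, abs_mul, abs_of_nonneg (hq0 k), abs_pow]
    apply mul_le_mul_of_nonneg_left _ (hq0 k)
    exact pow_le_pow_left₀ (abs_nonneg x) (habs x) k
  have hgx : ∀ x : ℝ, Summable (fun k => γ k * x ^ k) := by
    intro x
    apply Summable.of_norm_bounded (hγsum (|x| + 1) (by positivity))
    intro k
    rw [Real.norm_eq_abs, abs_mul, abs_pow]
    apply mul_le_mul_of_nonneg_left _ (abs_nonneg (γ k))
    exact pow_le_pow_left₀ (abs_nonneg x) (habs x) k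
  -- analyticity of g
  have hgan : AnalyticOnNhd ℝ g Set.univ := by
    set p := FormalMultilinearSeries.ofScalars ℝ γ with hp
    have hpr : p.radius = ⊤ := by
      apply p.radius_eq_top_of_summable_norm
      intro r
      have : ∀ n : ℕ, ‖p n‖ * (r : ℝ) ^ n = |γ n| * (r : ℝ) ^ n := by
        intro n
        rw [hp, FormalMultilinearSeries.ofScalars_norm, Real.norm_eq_abs]
      rw [funext this]
      exact hγsum r r.coe_nonneg
    have hball : HasFPowerSeriesOnBall p.sum p 0 ⊤ := by
      rw [← hpr]
      exact p.hasFPowerSeriesOnBall (by rw [hpr]; exact ENNReal.zero_lt_top)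
    have hge : g = p.sum := by
      funext x
      rw [hgdef]
      have : p.sum x = FormalMultilinearSeries.ofScalarsSum γ x := rfl
      rw [this, FormalMultilinearSeries.ofScalars_sum_eq]
      simp [smul_eq_mul]
    rw [hge]
    intro y _
    exact hball.analyticAt_of_mem (by simp [EMetric.mem_ball, edist_lt_top])
  -- derivative of g is h
  have hgderiv : ∀ x : ℝ, HasDerivAt g (h x) x := by
    intro x
    set R : ℝ := |x| + 1 with hR
    have hRpos : 0 < R := by positivity
    set u : ℕ → ℝ := fun k => (k : ℝ) * |γ k| * R ^ (k - 1) with hu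
    have husum : Summable u := by
      rw [← summable_nat_add_iff 1]
      have : (fun k => u (k + 1)) = fun k => q k * R ^ k := by
        funext k
        rw [hu]
        show ((k + 1 : ℕ) : ℝ) * |γ (k + 1)| * R ^ (k + 1 - 1) = q k * R ^ k
        rw [Nat.add_sub_cancel, abs_of_nonneg (hγnn (k + 1))]
        push_cast
        rw [show ((k : ℝ) + 1) * γ (k + 1) = γ (k + 1) * ((k : ℝ) + 1) from mul_comm _ _]
        rw [hγmul k]
      rw [this]
      exact hsum R hRpos.le
    have hderive : HasDerivAt g (∑' k, γ k * ((k : ℝ) * x ^ (k - 1))) x := by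
      apply hasDerivAt_tsum_of_isPreconnected husum (isOpen_Ioo (a := -R) (b := R))
        (isPreconnected_Ioo) (fun k y _ => (hasDerivAt_pow k y).const_mul (γ k))
        _ (Set.mem_Ioo.2 ⟨by linarith, hRpos⟩) _ _
      · intro k y hy
        rw [Real.norm_eq_abs, abs_mul, abs_mul, abs_pow]
        rw [hu, abs_of_nonneg (Nat.cast_nonneg (α := ℝ) k)]
        rw [show |γ k| * ((k:ℝ) * |y| ^ (k-1)) = (k:ℝ) * |γ k| * |y| ^ (k-1) from by ring]
        apply mul_le_mul_of_nonneg_left _ (by positivity)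
        apply pow_le_pow_left₀ (abs_nonneg y)
        rcases Set.mem_Ioo.1 hy with ⟨h1, h2⟩
        rw [abs_le]; constructor <;> linarith
      · apply summable_of_ne_finset_zero (s := {0})
        intro k hk
        simp only [Finset.mem_singleton] at hk
        simp [zero_pow hk]
      · exact Set.mem_Ioo.2 (abs_lt.1 (by rw [hR]; linarith [abs_nonneg x]))
    have hsum' : Summable (fun k => γ k * ((k : ℝ) * x ^ (k - 1))) := by
      apply Summable.of_norm_bounded husum
      intro k
      rw [Real.norm_eq_abs, abs_mul, abs_mul, abs_pow, hu,
        abs_of_nonneg (Nat.cast_nonneg (α := ℝ) k)]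
      rw [show |γ k| * ((k:ℝ) * |x| ^ (k-1)) = (k:ℝ) * |γ k| * |x| ^ (k-1) from by ring]
      apply mul_le_mul_of_nonneg_left _ (by positivity)
      apply pow_le_pow_left₀ (abs_nonneg x)
      rw [hR]; linarith
    have heq : (∑' k, γ k * ((k : ℝ) * x ^ (k - 1))) = h x := by
      rw [Summable.tsum_eq_zero_add hsum']
      have hz : γ 0 * ((0 : ℕ) : ℝ) * x ^ (0 - 1) = 0 := by simp
      have hterm : ∀ k : ℕ, γ (k + 1) * (((k + 1 : ℕ) : ℝ) * x ^ (k + 1 - 1)) = q k * x ^ k := by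
        intro k
        rw [Nat.add_sub_cancel]
        push_cast
        rw [show γ (k + 1) * (((k:ℝ) + 1) * x ^ k) = (γ (k + 1) * ((k:ℝ) + 1)) * x ^ k from by
          ring, hγmul k]
      simp only [hterm]
      rw [hhdef]
      simp
    rw [← heq]
    exact hderive
  -- positivity and domination properties of h
  have hterm_nonneg : ∀ (k : ℕ) (x : ℝ), 0 ≤ q k * x ^ k := by
    intro k x
    rcases Nat.even_or_odd k with hk | hk
    · exact mul_nonneg (hq0 k) (hk.pow_nonneg x)
    · rw [hqodd k (Nat.not_even_iff_odd.2 hk), zero_mul]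
  have hpos : ∀ x, 0 ≤ h x := fun x => tsum_nonneg (fun k => hterm_nonneg k x)
  have hc0 : ∀ x, c 0 ≤ h x := by
    intro x
    have h1 : q 0 * x ^ 0 ≤ h x := Summable.le_tsum (hhx x) 0 (fun k _ => hterm_nonneg k x)
    rw [pow_zero, mul_one, hqzero] at h1
    exact le_trans (hcd 0) h1
  have hdom : ∀ (n : ℕ) (x : ℝ), (n : ℝ) + 1 ≤ x → c n ≤ h x := by
    intro n x hx
    have hxpos : (0:ℝ) < x := lt_of_lt_of_le (by positivity) hx
    have h1 : q (σ n) * x ^ (σ n) ≤ h x := Summable.le_tsum (hhx x) (σ n) (fun k _ => hterm_nonneg k x)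
    have h2 : d n / ((n : ℝ) + 1) ^ (σ n) * x ^ (σ n) ≤ q (σ n) * x ^ (σ n) :=
      mul_le_mul_of_nonneg_right (hqσ n) (by positivity)
    have h3 : d n ≤ d n / ((n : ℝ) + 1) ^ (σ n) * x ^ (σ n) := by
      rw [div_mul_eq_mul_div, le_div_iff₀ (by positivity)]
      apply mul_le_mul_of_nonneg_left _ (hd0 n)
      exact pow_le_pow_left₀ (by positivity) hx _
    exact le_trans (hcd n) (le_trans h3 (le_trans h2 h1))
  exact ⟨g, h, hgan, hgderiv, hpos, hc0, hdom⟩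

lemma div_rescale (m : ℕ) (μ : (Fin m → ℝ) → ℝ) (W : (Fin m → ℝ) → (Fin m → ℝ))
    (F : (Fin m → ℝ) → ℝ) (x : Fin m → ℝ) (hμx : μ x ≠ 0)
    (DF : (Fin m → ℝ) →L[ℝ] ℝ) (hF : HasFDerivAt F DF x)
    (hWd : ∀ i, DifferentiableAt ℝ (fun y => μ y * W y i) x) :
    divDensity m μ (fun y => F y • W y) x = F x * divDensity m μ W x + DF (W x) := by
  have key : ∀ i, fderiv ℝ (fun y => μ y * (F y • W y) i) x =
      F x • fderiv ℝ (fun y => μ y * W y i) x + (μ x * W x i) • DF := by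
    intro i
    have h1 : (fun y => μ y * (F y • W y) i) = fun y => F y * (μ y * W y i) := by
      funext y
      simp only [Pi.smul_apply, smul_eq_mul]
      ring
    rw [h1]
    exact (hF.mul ((hWd i).hasFDerivAt)).fderiv
  have hsingle : ∀ i, fderiv ℝ (fun y => μ y * (F y • W y) i) x (Pi.single i 1)
      = F x * fderiv ℝ (fun y => μ y * W y i) x (Pi.single i 1)
        + (μ x * W x i) * DF (Pi.single i 1) := by
    intro i
    rw [key i, ContinuousLinearMap.add_apply, ContinuousLinearMap.smul_apply,
      ContinuousLinearMap.smul_apply, smul_eq_mul, smul_eq_mul]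
  have hWsum : W x = ∑ i, W x i • (Pi.single i 1 : Fin m → ℝ) := by
    have h0 : ∀ i, W x i • (Pi.single i 1 : Fin m → ℝ) = Pi.single i (W x i) := by
      intro i
      funext j
      rcases eq_or_ne j i with rfl | hji
      · simp [Pi.single_apply]
      · simp [Pi.single_apply, hji]
    rw [show (fun i => W x i • (Pi.single i 1 : Fin m → ℝ)) = (fun i => Pi.single i (W x i)) from
      funext h0]
    exact (Finset.univ_sum_single (W x)).symm
  have hDFW : DF (W x) = ∑ i, W x i * DF (Pi.single i 1) := by
    conv_lhs => rw [hWsum]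
    rw [map_sum]
    simp [smul_eq_mul]
  unfold divDensity
  rw [Finset.sum_congr rfl (fun i _ => hsingle i)]
  rw [Finset.sum_add_distrib, ← Finset.mul_sum]
  have h2 : ∑ i, (μ x * W x i) * DF (Pi.single i 1) = μ x * DF (W x) := by
    rw [hDFW, Finset.mul_sum]
    apply Finset.sum_congr rfl
    intro i _
    ring
  rw [h2]
  field_simp

/-- If the compact invariant set `K` admits a smooth Lyapunov function `l` on its basin `B`
(`l = 0` on `K`, `dl(W) < 0` outside `K`, `l → +∞` at the boundary of `B`, expressed by
compactness of the sublevel sets), and `div_μ(W) < 0` on a neighbourhood `V` of `K`, then there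
is a smooth positive function `F` on `B` with `div_μ(F·W) < 0` on all of `B`. -/
theorem extend_negative_divergence (m : ℕ)
    (W : (Fin m → ℝ) → (Fin m → ℝ)) (hWsm : ContDiff ℝ (⊤ : ℕ∞) W)
    (φ : ℝ → (Fin m → ℝ) → (Fin m → ℝ)) (hφ0 : ∀ x, φ 0 x = x)
    (hφ : ∀ (x : Fin m → ℝ) (t : ℝ), HasDerivAt (fun s => φ s x) (W (φ t x)) t)
    (μ : (Fin m → ℝ) → ℝ) (hμ : ContDiff ℝ (⊤ : ℕ∞) μ) (hμpos : ∀ x, 0 < μ x)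
    (K B : Set (Fin m → ℝ)) (hKc : IsCompact K) (hB : IsOpen B) (hKB : K ⊆ B)
    (hKinv : ∀ t : ℝ, ∀ x ∈ K, φ t x ∈ K)
    (hBinv : ∀ t : ℝ, 0 ≤ t → ∀ x ∈ B, φ t x ∈ B)
    (l : (Fin m → ℝ) → ℝ) (hl : ContDiffOn ℝ (⊤ : ℕ∞) l B)
    (hlK : ∀ x ∈ K, l x = 0)
    (hlW : ∀ x ∈ B \ K, fderiv ℝ l x (W x) < 0)
    (hproper : ∀ N : ℝ, IsCompact {x ∈ B | l x ≤ N})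
    (V : Set (Fin m → ℝ)) (hV : IsOpen V) (hKV : K ⊆ V) (hVB : V ⊆ B)
    (hdivV : ∀ x ∈ V, divDensity m μ W x < 0) :
    ∃ F : (Fin m → ℝ) → ℝ, ContDiffOn ℝ (⊤ : ℕ∞) F B ∧ (∀ x ∈ B, 0 < F x) ∧
      ∀ x ∈ B, divDensity m μ (fun y => F y • W y) x < 0 := by
  have hμne : ∀ x, μ x ≠ 0 := fun x => (hμpos x).ne'
  -- differentiability of l on B
  have hldiff : ∀ x ∈ B, HasFDerivAt l (fderiv ℝ l x) x := by
    intro x hx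
    exact ((hl.contDiffAt (hB.mem_nhds hx)).differentiableAt (by simp)).hasFDerivAt
  -- dl(W) vanishes on K
  have hdlK : ∀ x ∈ K, fderiv ℝ l x (W x) = 0 := by
    intro x hx
    have hcomp : HasDerivAt (fun s => l (φ s x)) (fderiv ℝ l x (W x)) 0 := by
      have h0 := hφ x 0
      rw [hφ0 x] at h0
      have hl0 : HasFDerivAt l (fderiv ℝ l x) ((fun s => φ s x) 0) := by
        simpa [hφ0 x] using hldiff x (hKB hx)
      exact hl0.comp_hasDerivAt 0 h0
    have hconst : (fun s => l (φ s x)) = fun _ => (0:ℝ) :=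
      funext fun s => hlK _ (hKinv s x hx)
    rw [hconst] at hcomp
    exact hcomp.unique (hasDerivAt_const 0 0)
  have hdlB : ∀ x ∈ B, fderiv ℝ l x (W x) ≤ 0 := by
    intro x hx
    by_cases hxK : x ∈ K
    · exact le_of_eq (hdlK x hxK)
    · exact (hlW x ⟨hx, hxK⟩).le
  -- continuity facts
  have hWi : ∀ i, ContDiff ℝ (⊤ : ℕ∞) (fun y => μ y * W y i) :=
    fun i => hμ.mul (contDiff_pi.1 hWsm i)
  have hdivWc : Continuous (divDensity m μ W) := by
    apply Continuous.div _ hμ.continuous hμne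
    apply continuous_finset_sum
    intro i _
    exact ((hWi i).continuous_fderiv (by simp)).clm_apply continuous_const
  have hfdlc : ContinuousOn (fun x => fderiv ℝ l x (W x)) B :=
    (hl.continuousOn_fderiv_of_isOpen hB (by simp)).clm_apply hWsm.continuous.continuousOn
  -- the bound function and its sups on compact slabs
  set qq : (Fin m → ℝ) → ℝ :=
    fun x => divDensity m μ W x / (-(fderiv ℝ l x (W x))) + 1 with hqq
  set D : ℕ → Set (Fin m → ℝ) :=
    fun n => {x ∈ B | l x ≤ (n:ℝ) + 2} \ V with hD
  have hDc : ∀ n, IsCompact (D n) := fun n => (hproper ((n:ℝ) + 2)).diff hV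
  have hDBK : ∀ n, ∀ x ∈ D n, x ∈ B \ K :=
    fun n x hx => ⟨hx.1.1, fun hk => hx.2 (hKV hk)⟩
  have hqc : ∀ n, ContinuousOn qq (D n) := by
    intro n
    apply ContinuousOn.add _ continuousOn_const
    apply ContinuousOn.div (hdivWc.continuousOn)
      ((hfdlc.mono (fun x hx => hx.1.1)).neg)
    intro x hx
    have := hlW x (hDBK n x hx)
    exact (neg_pos.2 this).ne'
  set cs : ℕ → ℝ := fun n => sSup (insert 0 (qq '' D n)) with hcs
  have hcle : ∀ n, ∀ x ∈ D n, qq x ≤ cs n := by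
    intro n x hx
    apply le_csSup
    · exact (((hDc n).image_of_continuousOn (hqc n)).bddAbove).insert 0
    · exact Set.mem_insert_of_mem _ (Set.mem_image_of_mem _ hx)
  -- entire dominating function
  obtain ⟨g, h, hgan, hgd, hh0, hhc0, hhdom⟩ := entire_dominating cs
  -- key domination on B \ V
  have hkey : ∀ x ∈ B \ V, qq x ≤ h (l x) := by
    intro x hx
    rcases lt_or_ge (l x) 1 with hlx | hlx
    · have hxD : x ∈ D 0 := ⟨⟨hx.1, by norm_num; linarith⟩, hx.2⟩
      exact le_trans (hcle 0 x hxD) (hhc0 (l x))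
    · have hfl1 : 1 ≤ ⌊l x⌋₊ := Nat.le_floor (by exact_mod_cast hlx)
      set n : ℕ := ⌊l x⌋₊ - 1 with hn
      have hcast : ((n:ℝ)) = (⌊l x⌋₊ : ℝ) - 1 := by
        rw [hn]
        push_cast [Nat.cast_sub hfl1]
        ring
      have h1 : (n:ℝ) + 1 ≤ l x := by
        rw [hcast]
        have := Nat.floor_le (le_trans zero_le_one hlx)
        linarith
      have h2 : l x ≤ (n:ℝ) + 2 := by
        rw [hcast]
        have := Nat.lt_floor_add_one (l x)
        linarith
      have hxD : x ∈ D n := ⟨⟨hx.1, h2⟩, hx.2⟩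
      exact le_trans (hcle n x hxD) (hhdom n (l x) h1)
  -- the rescaling function
  set F : (Fin m → ℝ) → ℝ := fun x => Real.exp (g (l x)) with hF
  have hgc : ContDiff ℝ (⊤ : ℕ∞) g := hgan.contDiff
  refine ⟨F, ?_, fun x _ => Real.exp_pos _, ?_⟩
  · exact Real.contDiff_exp.comp_contDiffOn (hgc.comp_contDiffOn hl)
  · intro x hx
    have hgl : HasFDerivAt (fun y => g (l y)) (h (l x) • fderiv ℝ l x) x :=
      (hgd (l x)).comp_hasFDerivAt x (hldiff x hx)
    have hFd : HasFDerivAt F ((F x * h (l x)) • fderiv ℝ l x) x := by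
      have hc := (Real.hasDerivAt_exp (g (l x))).comp_hasFDerivAt x hgl
      rw [smul_smul] at hc
      exact hc
    have hWd : ∀ i, DifferentiableAt ℝ (fun y => μ y * W y i) x :=
      fun i => ((hWi i).differentiable (by simp)) x
    rw [div_rescale m μ W F x (hμne x) _ hFd hWd]
    rw [ContinuousLinearMap.smul_apply, smul_eq_mul]
    have hFpos : 0 < F x := Real.exp_pos _
    have hmain : divDensity m μ W x + h (l x) * fderiv ℝ l x (W x) < 0 := by
      by_cases hxV : x ∈ V
      · have h1 := hdivV x hxV
        have h2 : h (l x) * fderiv ℝ l x (W x) ≤ 0 :=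
          mul_nonpos_of_nonneg_of_nonpos (hh0 (l x)) (hdlB x hx)
        linarith
      · have hdlneg : fderiv ℝ l x (W x) < 0 := hlW x ⟨hx, fun hk => hxV (hKV hk)⟩
        have hq := hkey x ⟨hx, hxV⟩
        have h2 : qq x * (-(fderiv ℝ l x (W x))) ≤ h (l x) * (-(fderiv ℝ l x (W x))) :=
          mul_le_mul_of_nonneg_right hq (by linarith)
        have h3 : qq x * (-(fderiv ℝ l x (W x)))
            = divDensity m μ W x + (-(fderiv ℝ l x (W x))) := by
          show (divDensity m μ W x / (-(fderiv ℝ l x (W x))) + 1) * (-(fderiv ℝ l x (W x)))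
              = divDensity m μ W x + (-(fderiv ℝ l x (W x)))
          rw [add_mul, one_mul, div_mul_cancel₀ _ (by linarith : -(fderiv ℝ l x (W x)) ≠ 0)]
        rw [h3] at h2
        nlinarith
    calc F x * divDensity m μ W x + F x * h (l x) * fderiv ℝ l x (W x)
        = F x * (divDensity m μ W x + h (l x) * fderiv ℝ l x (W x)) := by ring
    _ < 0 := mul_neg_of_pos_of_neg hFpos hmain
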